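/- arXiv:1208.5274 — 3 statements merged into one kernel-verified Lean document; each statement's English description precedes it below -/
import Mathlib

section
/- For every map N from a set M into S² with N(M) a proper subset of S², there exists a unit quaternion a ∈ S³ such that the map ψ := N·a + a·i is nowhere vanishing on M, and satisfies N·ψ = ψ·i at every point of M. -/
/-- The quaternion `i`. -/
def qi : Quaternion ℝ := ⟨0, 1, 0, 0⟩

/-- The quaternion `j`. -/
def qj : Quaternion ℝ := ⟨0, 0, 1, 0⟩

lemma qi_mul_qi : qi * qi = -1 := by
  ext <;> simp [Quaternion.re_mul, Quaternion.imI_mul, Quaternion.imJ_mul,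
    Quaternion.imK_mul] <;> simp [qi] <;> rfl

lemma key_lemma {M : Type*} (N : M → Quaternion ℝ)
    (hN : ∀ p, (N p).re = 0 ∧ (N p) ^ 2 = -1)
    (q : Quaternion ℝ) (hqr : q ∉ Set.range N)
    (a : Quaternion ℝ) (ha : ‖a‖ = 1) (hcomm : a * qi = -(q * a)) :
    ∀ p, N p * a + a * qi ≠ 0 ∧
      N p * (N p * a + a * qi) = (N p * a + a * qi) * qi := by
  have ha0 : a ≠ 0 := by
    intro h; rw [h, norm_zero] at ha; norm_num at ha
  intro p
  obtain ⟨_, h2⟩ := hN p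
  have hNN : N p * N p = -1 := by rw [← pow_two]; exact h2
  constructor
  · intro h
    apply hqr
    refine ⟨p, ?_⟩
    rw [hcomm, ← sub_eq_add_neg, sub_eq_zero] at h
    exact mul_right_cancel₀ ha0 h
  · calc N p * (N p * a + a * qi)
        = (N p * N p) * a + N p * a * qi := by noncomm_ring
      _ = (-1) * a + N p * a * qi := by rw [hNN]
      _ = N p * a * qi + a * (-1) := by noncomm_ring
      _ = N p * a * qi + a * (qi * qi) := by rw [qi_mul_qi]
      _ = (N p * a + a * qi) * qi := by noncomm_ring

/-- For any map `N : M → S²` whose image is a proper subset of `S²`, there is a unit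
quaternion `a` such that `ψ := N·a + a·i` is nowhere vanishing and `N·ψ = ψ·i` everywhere. -/
theorem exists_global_trivializing_section {M : Type*} (N : M → Quaternion ℝ)
    (hN : ∀ p, (N p).re = 0 ∧ (N p) ^ 2 = -1)
    (hproper : ∃ q : Quaternion ℝ, q.re = 0 ∧ q ^ 2 = -1 ∧ q ∉ Set.range N) :
    ∃ a : Quaternion ℝ, ‖a‖ = 1 ∧
      ∀ p, N p * a + a * qi ≠ 0 ∧
        N p * (N p * a + a * qi) = (N p * a + a * qi) * qi := by
  obtain ⟨q, hqre, hq2, hqr⟩ := hproper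
  have hqq : q * q = -1 := by rw [← pow_two]; exact hq2
  by_cases hq : q = qi
  · refine ⟨qj, ?_, key_lemma N hN q hqr _ ?_ ?_⟩
    · have h : Quaternion.normSq qj = 1 := by rw [Quaternion.normSq_def']; simp [qj]
      have h1 := Quaternion.normSq_eq_norm_mul_self qj
      nlinarith [norm_nonneg qj]
    · have h : Quaternion.normSq qj = 1 := by rw [Quaternion.normSq_def']; simp [qj]
      have h1 := Quaternion.normSq_eq_norm_mul_self qj
      nlinarith [norm_nonneg qj]
    · subst hq
      ext <;> simp [Quaternion.re_mul, Quaternion.imI_mul, Quaternion.imJ_mul,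
        Quaternion.imK_mul] <;> simp [qi, qj]
  · set b : Quaternion ℝ := qi - q with hb
    have hb0 : b ≠ 0 := sub_ne_zero.mpr (fun h => hq h.symm)
    have hnb : ‖b‖ ≠ 0 := norm_ne_zero_iff.mpr hb0
    refine ⟨‖b‖⁻¹ • b, ?_, key_lemma N hN q hqr _ ?_ ?_⟩
    · rw [norm_smul, norm_inv, norm_norm, inv_mul_cancel₀ hnb]
    · rw [norm_smul, norm_inv, norm_norm, inv_mul_cancel₀ hnb]
    · rw [smul_mul_assoc, mul_smul_comm, ← smul_neg]
      congr 1
      rw [hb]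
      calc (qi - q) * qi = qi * qi - q * qi := by noncomm_ring
        _ = -1 - q * qi := by rw [qi_mul_qi]
        _ = -(q * qi - -1) := by abel
        _ = -(q * qi - q * q) := by rw [hqq]
        _ = -(q * (qi - q)) := by noncomm_ring
end

section
/- Let ω and η be quaternion-valued ℝ-linear one-forms on a 2-dimensional real vector space with complex structure J, and N ∈ Im ℍ with N² = -1. Then ω^N ∧ η_N = 0 and ω^{-N} ∧ η_{-N} = 0, and consequently ω ∧ η = ω^N ∧ η_{-N} + ω^{-N} ∧ η_N. -/
section

variable {V : Type*} [AddCommGroup V] [Module ℝ V]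

/-- `ω^N := (1/2)(ω - (∗ω)·N)`, where `∗ω := ω ∘ J`. -/
noncomputable def formUpN (J : V →ₗ[ℝ] V) (N : Quaternion ℝ) (ω : V →ₗ[ℝ] Quaternion ℝ) : V → Quaternion ℝ :=
  fun v => (2⁻¹ : ℝ) • (ω v - ω (J v) * N)

/-- `ω_N := (1/2)(ω - N·(∗ω))`, where `∗ω := ω ∘ J`. -/
noncomputable def formDnN (J : V →ₗ[ℝ] V) (N : Quaternion ℝ) (ω : V →ₗ[ℝ] Quaternion ℝ) : V → Quaternion ℝ :=
  fun v => (2⁻¹ : ℝ) • (ω v - N * ω (J v))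

/-- The wedge product of `ℍ`-valued one-forms, using quaternionic multiplication. -/
noncomputable def qwedge (α β : V → Quaternion ℝ) : V → V → Quaternion ℝ :=
  fun X Y => α X * β Y - α Y * β X

/-- In a 2-dimensional space with complex structure `J`, every vector is a
combination of `X` and `J X` for nonzero `X`. -/
lemma key_pair (hdim : Module.finrank ℝ V = 2)
    (J : V →ₗ[ℝ] V) (hJ : ∀ v, J (J v) = -v) (X Y : V) (hX : X ≠ 0) :
    ∃ a b : ℝ, a • X + b • (J X) = Y := by
  have hli : LinearIndependent ℝ ![X, J X] := by
    rw [LinearIndependent.pair_iff]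
    intro s t hst
    have h2 : s • J X + t • (-X) = 0 := by
      have := congrArg J hst
      simpa [hJ] using this
    have e1 : s • X = -(t • J X) := by linear_combination (norm := module) hst
    have e2 : s • J X = t • X := by linear_combination (norm := module) h2
    have h3 : (s^2 + t^2) • X = 0 := by
      calc (s^2 + t^2) • X = s • (s • X) + t • (t • X) := by module
        _ = s • (-(t • J X)) + t • (s • J X) := by rw [e1, e2]
        _ = 0 := by module
    have hst0 : s^2 + t^2 = 0 := by
      by_contra h
      exact hX (by simpa [h] using smul_eq_zero.mp h3)
    constructor <;> nlinarith [sq_nonneg s, sq_nonneg t]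
  haveI : FiniteDimensional ℝ V := Module.finite_of_finrank_eq_succ hdim
  have hspan : Submodule.span ℝ (Set.range ![X, J X]) = ⊤ := by
    apply Submodule.eq_top_of_finrank_eq
    rw [finrank_span_eq_card hli, hdim]; simp
  have hY : Y ∈ Submodule.span ℝ ({X, J X} : Set V) := by
    have hr : Set.range ![X, J X] = {X, J X} := by
      rw [Set.pair_comm]; simp [Matrix.range_cons, Matrix.range_empty]
    rw [← hr, hspan]; trivial
  exact Submodule.mem_span_pair.mp hY

/-- A map which is linear in the second argument, vanishes on the diagonal and
on pairs `(v, J v)`, vanishes identically in dimension 2. -/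
lemma key_zero (hdim : Module.finrank ℝ V = 2)
    (J : V →ₗ[ℝ] V) (hJ : ∀ v, J (J v) = -v)
    (f : V → V → Quaternion ℝ)
    (h0 : ∀ Y, f 0 Y = 0)
    (hadd : ∀ X Y Z, f X (Y + Z) = f X Y + f X Z)
    (hsmul : ∀ (a : ℝ) X Y, f X (a • Y) = a • f X Y)
    (halt : ∀ v, f v v = 0)
    (hJv : ∀ v, f v (J v) = 0) : ∀ X Y, f X Y = 0 := by
  intro X Y
  by_cases hX : X = 0
  · rw [hX]; exact h0 Y
  · obtain ⟨a, b, hab⟩ := key_pair hdim J hJ X Y hX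
    rw [← hab, hadd, hsmul, hsmul, halt, hJv]
    simp

lemma quat_helper {N : Quaternion ℝ} (hNN : N * N = -1) :
    ∀ x y : Quaternion ℝ, x * (N * (N * y)) = -(x * y) := by
  intro x y
  rw [← mul_assoc N N y, hNN, neg_one_mul, mul_neg]

lemma quat_id1 (N a b c d : Quaternion ℝ) (hNN : N * N = -1) :
    (a - b * N) * (d + N * c) = (b + a * N) * (c - N * d) := by
  have h1 := quat_helper hNN
  simp only [sub_mul, mul_add, add_mul, mul_sub, mul_assoc, h1]
  abel

lemma quat_id3 (N a b c d : Quaternion ℝ) (hNN : N * N = -1) :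
    a * d - b * c =
      ((2⁻¹ : ℝ) • (a - b * N)) * ((2⁻¹ : ℝ) • (d - N * c)) -
        ((2⁻¹ : ℝ) • (b + a * N)) * ((2⁻¹ : ℝ) • (c + N * d)) +
      (((2⁻¹ : ℝ) • (a + b * N)) * ((2⁻¹ : ℝ) • (d + N * c)) -
        ((2⁻¹ : ℝ) • (b - a * N)) * ((2⁻¹ : ℝ) • (c - N * d))) := by
  have h1 := quat_helper hNN
  simp only [smul_mul_assoc, mul_smul_comm, smul_smul, sub_mul, mul_add, add_mul,
    mul_sub, mul_assoc, h1, smul_sub, smul_add, smul_neg]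
  match_scalars <;> norm_num

-- linearity lemmas for formUpN / formDnN
lemma formUpN_zero (J : V →ₗ[ℝ] V) (N : Quaternion ℝ) (ω : V →ₗ[ℝ] Quaternion ℝ) :
    formUpN J N ω 0 = 0 := by simp [formUpN]

lemma formUpN_add (J : V →ₗ[ℝ] V) (N : Quaternion ℝ) (ω : V →ₗ[ℝ] Quaternion ℝ) (Y Z : V) :
    formUpN J N ω (Y + Z) = formUpN J N ω Y + formUpN J N ω Z := by
  simp only [formUpN, map_add, add_mul]; module

lemma formUpN_smul (J : V →ₗ[ℝ] V) (N : Quaternion ℝ) (ω : V →ₗ[ℝ] Quaternion ℝ) (a : ℝ) (Y : V) :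
    formUpN J N ω (a • Y) = a • formUpN J N ω Y := by
  simp only [formUpN, map_smul, smul_mul_assoc]; module

lemma formDnN_zero (J : V →ₗ[ℝ] V) (N : Quaternion ℝ) (ω : V →ₗ[ℝ] Quaternion ℝ) :
    formDnN J N ω 0 = 0 := by simp [formDnN]

lemma formDnN_add (J : V →ₗ[ℝ] V) (N : Quaternion ℝ) (ω : V →ₗ[ℝ] Quaternion ℝ) (Y Z : V) :
    formDnN J N ω (Y + Z) = formDnN J N ω Y + formDnN J N ω Z := by
  simp only [formDnN, map_add, mul_add]; module

lemma formDnN_smul (J : V →ₗ[ℝ] V) (N : Quaternion ℝ) (ω : V →ₗ[ℝ] Quaternion ℝ) (a : ℝ) (Y : V) :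
    formDnN J N ω (a • Y) = a • formDnN J N ω Y := by
  simp only [formDnN, map_smul, mul_smul_comm]; module

/-- `ω^N ∧ η_N = 0`, `ω^{-N} ∧ η_{-N} = 0`, and hence
`ω ∧ η = ω^N ∧ η_{-N} + ω^{-N} ∧ η_N`. -/
theorem wedge_type_decomposition
    (hdim : Module.finrank ℝ V = 2)
    (J : V →ₗ[ℝ] V) (hJ : ∀ v, J (J v) = -v)
    (N : Quaternion ℝ) (hre : N.re = 0) (hN2 : N ^ 2 = -1)
    (ω η : V →ₗ[ℝ] Quaternion ℝ) :
    (∀ X Y, qwedge (formUpN J N ω) (formDnN J N η) X Y = 0) ∧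
    (∀ X Y, qwedge (formUpN J (-N) ω) (formDnN J (-N) η) X Y = 0) ∧
    (∀ X Y, qwedge (fun v => ω v) (fun v => η v) X Y =
      qwedge (formUpN J N ω) (formDnN J (-N) η) X Y +
        qwedge (formUpN J (-N) ω) (formDnN J N η) X Y) := by
  have hNN : N * N = -1 := by rw [← sq]; exact hN2
  have hNN' : (-N) * (-N) = -1 := by rw [neg_mul_neg]; exact hNN
  -- first part, for arbitrary M with M * M = -1
  have main : ∀ M : Quaternion ℝ, M * M = -1 →
      ∀ X Y, qwedge (formUpN J M ω) (formDnN J M η) X Y = 0 := by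
    intro M hM
    apply key_zero hdim J hJ
    · intro Y; simp [qwedge, formUpN_zero, formDnN_zero]
    · intro X Y Z
      simp only [qwedge, formUpN_add, formDnN_add, mul_add, add_mul]
      abel
    · intro a X Y
      simp only [qwedge, formUpN_smul, formDnN_smul, smul_mul_assoc, mul_smul_comm, smul_sub]
    · intro v; simp [qwedge]
    · intro v
      simp only [qwedge, formUpN, formDnN, hJ, map_neg, mul_neg, neg_neg, sub_neg_eq_add, neg_mul]
      rw [sub_eq_zero]
      simp only [smul_mul_assoc, mul_smul_comm]
      rw [quat_id1 M (ω v) (ω (J v)) (η v) (η (J v)) hM]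
  refine ⟨main N hNN, main (-N) hNN', ?_⟩
  -- third part
  have h3 := key_zero hdim J hJ
    (fun X Y => qwedge (fun v => ω v) (fun v => η v) X Y -
      (qwedge (formUpN J N ω) (formDnN J (-N) η) X Y +
        qwedge (formUpN J (-N) ω) (formDnN J N η) X Y))
    (by intro Y; simp [qwedge, formUpN_zero, formDnN_zero])
    (by
      intro X Y Z
      simp only [qwedge, formUpN_add, formDnN_add, map_add, mul_add, add_mul]
      abel)
    (by
      intro a X Y
      simp only [qwedge, formUpN_smul, formDnN_smul, map_smul, smul_mul_assoc,
        mul_smul_comm, smul_sub, smul_add])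
    (by intro v; simp [qwedge])
    (by
      intro v
      simp only [qwedge, formUpN, formDnN, hJ, map_neg, mul_neg, neg_neg, neg_mul,
        sub_neg_eq_add, neg_smul]
      rw [sub_eq_zero]
      have := quat_id3 N (ω v) (ω (J v)) (η v) (η (J v)) hNN
      convert this using 2 <;> module)
  intro X Y
  have := h3 X Y
  simp only [sub_eq_zero] at this
  exact this

end
end

section
/- A quaternionic Möbius transformation Φ(a) = (pa+q)(ra+s)⁻¹ with p,q,r,s ∈ ℍ maps the open unit ball B³ ⊂ ℍ into itself if the conditions |p| = |s|, |q| = |r|, |p|² - |r|² = 1, conj(p)q = conj(r)s, and p·conj(r) = q·conj(s) hold. -/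
open Quaternion

private lemma re_mul_comm (x y : Quaternion ℝ) : (x * y).re = (y * x).re := by
  simp only [Quaternion.re_mul]; ring

/-- A quaternionic Möbius transformation `Φ(a) = (pa+q)(ra+s)⁻¹` maps the open unit ball
`B³ ⊂ ℍ` into itself if `|p| = |s|`, `|q| = |r|`, `|p|² - |r|² = 1`, `conj(p)q = conj(r)s`
and `p·conj(r) = q·conj(s)`. -/
theorem mobius_maps_ball (p q r s : Quaternion ℝ)
    (h1 : ‖p‖ = ‖s‖) (h2 : ‖q‖ = ‖r‖) (h3 : ‖p‖ ^ 2 - ‖r‖ ^ 2 = 1)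
    (h4 : star p * q = star r * s) (h5 : p * star r = q * star s) :
    ∀ a : Quaternion ℝ, ‖a‖ < 1 → ‖(p * a + q) * (r * a + s)⁻¹‖ < 1 := by
  intro a ha
  have hns : ∀ x : Quaternion ℝ, normSq x = ‖x‖ ^ 2 := by
    intro x; rw [Quaternion.normSq_eq_norm_mul_self, sq]
  -- cross terms equal
  have hcross : (p * a * star q).re = (r * a * star s).re := by
    have e1 : (p * a * star q).re = (star q * p * a).re :=
      re_mul_comm (p * a) (star q) ▸ by rw [mul_assoc]
    have e2 : star q * p = star s * r := by
      have := congrArg star h4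
      simpa [star_mul] using this
    rw [e1, e2, mul_assoc]
    exact re_mul_comm _ _
  -- key identity
  have key : normSq (r * a + s) - normSq (p * a + q) = 1 - normSq a := by
    rw [Quaternion.normSq_add, Quaternion.normSq_add, hcross]
    have hp : normSq (p * a) = normSq p * normSq a := map_mul normSq p a
    have hr : normSq (r * a) = normSq r * normSq a := map_mul normSq r a
    rw [hp, hr]
    have hq : normSq q = normSq r := by rw [hns, hns, h2]
    have hs : normSq s = normSq p := by rw [hns, hns, h1]
    have h3' : normSq p - normSq r = 1 := by rw [hns, hns]; exact h3
    rw [hq, hs]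
    linear_combination (1 - normSq a) * h3'
  have hna : normSq a < 1 := by
    rw [hns]
    nlinarith [norm_nonneg a]
  have hlt : normSq (p * a + q) < normSq (r * a + s) := by
    nlinarith [key, hna]
  have hden : (r * a + s) ≠ 0 := by
    intro h
    have := Quaternion.normSq_nonneg (a := p * a + q)
    rw [h, map_zero] at hlt
    linarith
  have hnormlt : ‖p * a + q‖ < ‖r * a + s‖ := by
    have := hlt
    rw [hns, hns] at this
    have h0 : (0:ℝ) ≤ ‖p * a + q‖ := norm_nonneg _
    nlinarith [norm_nonneg (r * a + s)]
  rw [norm_mul, norm_inv]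
  have hpos : 0 < ‖r * a + s‖ := norm_pos_iff.mpr hden
  rw [mul_inv_lt_iff₀' hpos]
  linarith
end
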